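/- Let f be L-smooth and μ-strongly quasi-convex with unique minimizer x*, and suppose at iteration k the stochastic gradient g^k is conditionally unbiased (E[g^k | x^k] = ∇f(x^k)) with E[‖g^k‖² | x^k] ≤ 2A′(f(x^k) − f(x*)) + D′₁. Consider the perturbed iterate x̃^{k+1} = x̃^k − γ g^k where x̃^k = x^k − e^k. If γ ≤ 1/(4A′), then E[‖x̃^{k+1} − x*‖² | x^k] ≤ (1 − γμ/2)‖x̃^k − x*‖² − (γ/2)(f(x^k) − f(x*)) + γ²D′₁ + γ(2L + μ)‖e^k‖². -/

import Mathlib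

/-!
Expanding the square and using unbiasedness,
`E‖x̃ᵏ⁺¹ - x*‖² = ‖x̃ᵏ - x*‖² - 2γ⟪x̃ᵏ - x*, ∇f(xᵏ)⟫ + γ² E‖gᵏ‖²`.
Write `x̃ᵏ - x* = (xᵏ - x*) - eᵏ`. Strong quasi-convexity bounds `⟪∇f(xᵏ), xᵏ - x*⟫` from below;
the error term `⟪eᵏ, ∇f(xᵏ)⟫` is handled by Young's inequality together with
`‖∇f(x)‖² ≤ 2L (f x - f x*)`, which is the descent lemma applied at the gradient step
`x - L⁻¹ ∇f(x)`. Finally `‖x̃ᵏ - x*‖² ≤ 2‖xᵏ - x*‖² + 2‖eᵏ‖²`, and `γ ≤ 1/(4A')` absorbs half of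
the second moment into the decrease of `f`.
-/

open MeasureTheory
open scoped RealInnerProductSpace

section

variable {E : Type*} [NormedAddCommGroup E] [InnerProductSpace ℝ E]

theorem le_two_inner_sub_of_sq_le_of_le_inner {L m F : ℝ} (hL : 0 < L) (hm : 0 ≤ m) {g r : E}
    (hg : ‖g‖ ^ 2 ≤ 2 * L * F) (hq : F + m / 2 * ‖r‖ ^ 2 ≤ ⟪g, r⟫) (e : E) :
    F + m / 2 * ‖r - e‖ ^ 2 - (2 * L + m) * ‖e‖ ^ 2 ≤ 2 * ⟪r - e, g⟫ := by
  have hyoung : ⟪e, g⟫ ≤ L * ‖e‖ ^ 2 + F / 2 := by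
    nlinarith [real_inner_le_norm e g, sq_nonneg (2 * L * ‖e‖ - ‖g‖)]
  have hpar : ‖r - e‖ ^ 2 ≤ 2 * ‖r‖ ^ 2 + 2 * ‖e‖ ^ 2 := by
    nlinarith [parallelogram_law_with_norm ℝ r e, sq_nonneg ‖r + e‖]
  rw [inner_sub_left, real_inner_comm]
  nlinarith

variable [CompleteSpace E]

theorem integral_norm_sub_smul_sq {Ω : Type*} [MeasurableSpace Ω] {μ : Measure Ω}
    [IsProbabilityMeasure μ] {g : Ω → E} (hg : MemLp g 2 μ) (c : E) (γ : ℝ) :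
    ∫ w, ‖c - γ • g w‖ ^ 2 ∂μ = ‖c‖ ^ 2 - 2 * γ * ⟪c, ∫ w, g w ∂μ⟫ + γ ^ 2 * ∫ w, ‖g w‖ ^ 2 ∂μ := by
  have hint : Integrable g μ := hg.integrable one_le_two
  have hinner : Integrable (fun w => 2 * γ * ⟪c, g w⟫) μ := (hint.const_inner c).const_mul _
  have hsq : Integrable (fun w => γ ^ 2 * ‖g w‖ ^ 2) μ := hg.norm.integrable_sq.const_mul _
  simp_rw [norm_sub_sq_real, real_inner_smul_right, norm_smul, mul_pow, Real.norm_eq_abs, sq_abs,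
    ← mul_assoc]
  have hlin : Integrable (fun w => ‖c‖ ^ 2 - 2 * γ * ⟪c, g w⟫) μ :=
    (integrable_const _).sub hinner
  rw [integral_add hlin hsq, integral_sub (integrable_const _) hinner,
    integral_const_mul, integral_const_mul, integral_inner hint]
  simp

variable {f : E → ℝ} {f' : E → E} {L : ℝ}

theorem HasGradientAt.hasDerivAt_comp_add_smul {y v : E} {t : ℝ}
    (h : HasGradientAt f (f' (y + t • v)) (y + t • v)) :
    HasDerivAt (fun s : ℝ => f (y + s • v)) ⟪f' (y + t • v), v⟫ t := by
  have hline : HasDerivAt (fun s : ℝ => y + s • v) v t := by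
    simpa using ((hasDerivAt_id t).smul_const v).const_add y
  simpa [Function.comp_def] using h.hasFDerivAt.comp_hasDerivAt t hline

theorem le_add_inner_add_sq_of_lipschitz_gradient (hgrad : ∀ y, HasGradientAt f (f' y) y)
    (hlip : ∀ y z, ‖f' y - f' z‖ ≤ L * ‖y - z‖) (y z : E) :
    f z ≤ f y + ⟪f' y, z - y⟫ + L / 2 * ‖z - y‖ ^ 2 := by
  set v := z - y
  let φ : ℝ → ℝ := fun t => f (y + t • v) - t * ⟪f' y, v⟫ - L / 2 * t ^ 2 * ‖v‖ ^ 2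
  have hφ : ∀ t, HasDerivAt φ (⟪f' (y + t • v) - f' y, v⟫ - L * t * ‖v‖ ^ 2) t := by
    intro t
    have := (((hgrad (y + t • v)).hasDerivAt_comp_add_smul).sub
      ((hasDerivAt_id t).mul_const ⟪f' y, v⟫)).sub
      ((((hasDerivAt_pow 2 t).const_mul (L / 2)).mul_const (‖v‖ ^ 2)))
    refine this.congr_deriv ?_
    rw [inner_sub_left]
    ring
  have hφ' : ∀ t ∈ interior (Set.Icc (0 : ℝ) 1),
      ⟪f' (y + t • v) - f' y, v⟫ - L * t * ‖v‖ ^ 2 ≤ 0 := by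
    intro t ht
    rw [interior_Icc] at ht
    have : ⟪f' (y + t • v) - f' y, v⟫ ≤ L * t * ‖v‖ ^ 2 := calc
      _ ≤ ‖f' (y + t • v) - f' y‖ * ‖v‖ := real_inner_le_norm _ _
      _ ≤ L * ‖(y + t • v) - y‖ * ‖v‖ := by gcongr; exact hlip _ _
      _ = L * t * ‖v‖ ^ 2 := by
        rw [add_sub_cancel_left, norm_smul, Real.norm_of_nonneg ht.1.le]; ring
    linarith
  have hanti : AntitoneOn φ (Set.Icc 0 1) :=
    antitoneOn_of_hasDerivWithinAt_nonpos (convex_Icc 0 1)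
      (fun t _ => (hφ t).continuousAt.continuousWithinAt)
      (fun t _ => (hφ t).hasDerivWithinAt) hφ'
  have h10 := hanti (by simp) (by simp) zero_le_one
  simp only [φ, zero_smul, add_zero, one_smul, add_sub_cancel, v] at h10
  linarith

theorem norm_sq_le_of_lipschitz_gradient (hL : 0 < L) (hgrad : ∀ y, HasGradientAt f (f' y) y)
    (hlip : ∀ y z, ‖f' y - f' z‖ ≤ L * ‖y - z‖) {xstar : E} (hmin : ∀ y, f xstar ≤ f y) (x : E) :
    ‖f' x‖ ^ 2 ≤ 2 * L * (f x - f xstar) := by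
  have hstep := le_add_inner_add_sq_of_lipschitz_gradient hgrad hlip x (x - L⁻¹ • f' x)
  rw [sub_sub_cancel_left, inner_neg_right, norm_neg, real_inner_smul_right, norm_smul,
    real_inner_self_eq_norm_sq, Real.norm_of_nonneg (inv_nonneg.2 hL.le)] at hstep
  have := (hmin (x - L⁻¹ • f' x)).trans hstep
  field_simp at this
  nlinarith

end

theorem ec_sgd_descent_step_general {Ω : Type*} [MeasurableSpace Ω]
    (μ : Measure Ω) [IsProbabilityMeasure μ]
    (d : ℕ) (L m γ A' D₁' : ℝ)
    (hL : 0 < L) (hm0 : 0 ≤ m)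
    (hγ0 : 0 < γ) (hγ : γ ≤ 1 / (4 * A'))
    (f : EuclideanSpace ℝ (Fin d) → ℝ)
    (f' : EuclideanSpace ℝ (Fin d) → EuclideanSpace ℝ (Fin d))
    (hgrad : ∀ y, HasGradientAt f (f' y) y)
    (hlip : ∀ y z, ‖f' y - f' z‖ ≤ L * ‖y - z‖)
    (xstar : EuclideanSpace ℝ (Fin d))
    (hmin : ∀ y, f xstar ≤ f y)
    (hqsc : ∀ y, f y + ⟪f' y, xstar - y⟫ + m / 2 * ‖y - xstar‖ ^ 2 ≤ f xstar)
    (x e : EuclideanSpace ℝ (Fin d)) (g : Ω → EuclideanSpace ℝ (Fin d))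
    (hgL2 : MemLp g 2 μ)
    (hunb : ∫ w, g w ∂μ = f' x)
    (hsec : ∫ w, ‖g w‖ ^ 2 ∂μ ≤ 2 * A' * (f x - f xstar) + D₁') :
    ∫ w, ‖(x - e - γ • g w) - xstar‖ ^ 2 ∂μ ≤
      (1 - γ * m / 2) * ‖(x - e) - xstar‖ ^ 2 - γ / 2 * (f x - f xstar)
        + γ ^ 2 * D₁' + γ * (2 * L + m) * ‖e‖ ^ 2 := by
  have hq : f x - f xstar + m / 2 * ‖x - xstar‖ ^ 2 ≤ ⟪f' x, x - xstar⟫ := by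
    have := hqsc x
    rw [← neg_sub, inner_neg_right] at this
    linarith
  have hcorr := le_two_inner_sub_of_sq_le_of_le_inner hL hm0
    (norm_sq_le_of_lipschitz_gradient hL hgrad hlip hmin x) hq e
  have hγA : 4 * A' * γ ≤ 1 := by
    rcases le_or_gt A' 0 with hA' | hA'
    · nlinarith
    · rwa [le_div_iff₀ (by positivity), mul_comm] at hγ
  have hF : 0 ≤ γ * (f x - f xstar) := mul_nonneg hγ0.le (sub_nonneg.2 (hmin x))
  simp_rw [show ∀ w, x - e - γ • g w - xstar = (x - xstar - e) - γ • g w from fun _ => by abel,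
    sub_right_comm x e xstar]
  rw [integral_norm_sub_smul_sq hgL2, hunb]
  nlinarith [mul_le_mul_of_nonneg_left hcorr hγ0.le, mul_le_mul_of_nonneg_left hsec (sq_nonneg γ),
    mul_nonneg (sub_nonneg.2 hγA) hF]

theorem ec_sgd_descent_step {Ω : Type*} [MeasurableSpace Ω]
    (μ : Measure Ω) [IsProbabilityMeasure μ]
    (d : ℕ) (L m γ A' D₁' : ℝ)
    (hL : 0 < L) (hm0 : 0 ≤ m) (hmL : m ≤ L) (hA' : 0 < A') (hD : 0 ≤ D₁')
    (hγ0 : 0 < γ) (hγ : γ ≤ 1 / (4 * A'))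
    (f : EuclideanSpace ℝ (Fin d) → ℝ)
    (f' : EuclideanSpace ℝ (Fin d) → EuclideanSpace ℝ (Fin d))
    (hgrad : ∀ y, HasGradientAt f (f' y) y)
    (hlip : ∀ y z, ‖f' y - f' z‖ ≤ L * ‖y - z‖)
    (xstar : EuclideanSpace ℝ (Fin d))
    (hmin : ∀ y, f xstar ≤ f y)
    (hqsc : ∀ y, f y + ⟪f' y, xstar - y⟫ + m / 2 * ‖y - xstar‖ ^ 2 ≤ f xstar)
    (x e : EuclideanSpace ℝ (Fin d)) (g : Ω → EuclideanSpace ℝ (Fin d))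
    (hgL2 : MemLp g 2 μ)
    (hunb : ∫ w, g w ∂μ = f' x)
    (hsec : ∫ w, ‖g w‖ ^ 2 ∂μ ≤ 2 * A' * (f x - f xstar) + D₁') :
    ∫ w, ‖(x - e - γ • g w) - xstar‖ ^ 2 ∂μ ≤
      (1 - γ * m / 2) * ‖(x - e) - xstar‖ ^ 2 - γ / 2 * (f x - f xstar)
        + γ ^ 2 * D₁' + γ * (2 * L + m) * ‖e‖ ^ 2 :=
  ec_sgd_descent_step_general μ d L m γ A' D₁' hL hm0 hγ0 hγ f f' hgrad hlip xstar hmin hqsc x e g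
    hgL2 hunb hsec
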